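/- arXiv:1709.00247 — 3 statements merged into one kernel-verified Lean document; each statement's English description precedes it below -/
import Mathlib

section
/- Let 0 < k < 1 be real and n₀, u, n natural numbers with n₀ ≥ 2/k, u ≤ ⌊k·n₀⌋ - 1, and n ≥ n₀ + u. Then n₀/2 + u ≤ ((1+2k)/(2+2k))·n. -/
theorem stmt_3 (k : ℝ) (n₀ u n : ℕ) (hk0 : 0 < k) (hk1 : k < 1)
    (hn₀ : (n₀ : ℝ) ≥ 2 / k)
    (hu : (u : ℤ) ≤ ⌊k * (n₀ : ℝ)⌋ - 1)
    (hn : n ≥ n₀ + u) :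
    (n₀ : ℝ) / 2 + u ≤ ((1 + 2 * k) / (2 + 2 * k)) * n := by
  have hfl : (⌊k * (n₀ : ℝ)⌋ : ℝ) ≤ k * n₀ := Int.floor_le _
  have hu' : (u : ℝ) ≤ k * n₀ - 1 := by
    have : ((u : ℤ) : ℝ) ≤ ((⌊k * (n₀ : ℝ)⌋ - 1 : ℤ) : ℝ) := by exact_mod_cast hu
    push_cast at this
    linarith
  have hn' : (n : ℝ) ≥ (n₀ : ℝ) + u := by exact_mod_cast hn
  have hden : (0 : ℝ) < 2 + 2 * k := by linarith
  rw [div_mul_eq_mul_div, le_div_iff₀ hden]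
  nlinarith [mul_pos hk0 (lt_of_lt_of_le (by positivity : (0:ℝ) < 2/k) hn₀)]
end

section
/- Let 0 < k < 1 be real and n₀, u, n natural numbers with n₀ ≥ 1, u = max(1, ⌊k·n₀⌋), and n ≤ n₀ + u. Then n < (2/k + 1)·u. -/
theorem stmt_7 (k : ℝ) (n₀ n : ℕ) (u : ℤ) (hk0 : 0 < k) (hk1 : k < 1)
    (hn₀ : 1 ≤ n₀)
    (hu : u = max 1 ⌊k * (n₀ : ℝ)⌋)
    (hn : (n : ℝ) ≤ (n₀ : ℝ) + (u : ℝ)) :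
    (n : ℝ) < (2 / k + 1) * (u : ℝ) := by
  have h1 : (1 : ℤ) ≤ u := by rw [hu]; exact le_max_left _ _
  have h2 : ⌊k * (n₀ : ℝ)⌋ ≤ u := by rw [hu]; exact le_max_right _ _
  have h3 : k * (n₀ : ℝ) - 1 < (u : ℝ) := by
    calc k * (n₀ : ℝ) - 1 < ⌊k * (n₀ : ℝ)⌋ := Int.sub_one_lt_floor _
    _ ≤ (u : ℝ) := by exact_mod_cast h2
  have h4 : (1 : ℝ) ≤ (u : ℝ) := by exact_mod_cast h1
  have key : (n₀ : ℝ) < 2 / k * (u : ℝ) := by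
    rw [div_mul_eq_mul_div, lt_div_iff₀ hk0]
    nlinarith
  nlinarith
end

section
/- The recursive BuildTree algorithm, which given a sorted array of n distinct keys returns the tree whose root is the median element and whose left and right subtrees are built recursively from the left and right halves, produces a binary search tree that is perfectly balanced (for every node, left and right subtree sizes differ by at most 1) and contains exactly the keys of the array. -/
inductive BTree (α : Type) where
  | leaf : BTree α
  | node : BTree α → α → BTree α → BTree α

def BTree.size {α : Type} : BTree α → ℕ
  | .leaf => 0
  | .node l _ r => l.size + r.size + 1

def BTree.keys {α : Type} : BTree α → List α
  | .leaf => []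
  | .node l x r => l.keys ++ x :: r.keys

/-- Perfectly balanced: at every node, the left and right subtree sizes differ
by at most 1. -/
def BTree.balanced {α : Type} : BTree α → Prop
  | .leaf => True
  | .node l _ r =>
      ((l.size : ℤ) - r.size).natAbs ≤ 1 ∧ l.balanced ∧ r.balanced

/-- Binary search tree property. -/
def BTree.isBST {α : Type} [LinearOrder α] : BTree α → Prop
  | .leaf => True
  | .node l x r =>
      (∀ y ∈ l.keys, y < x) ∧ (∀ y ∈ r.keys, x < y) ∧ l.isBST ∧ r.isBST

/-- `buildTree` from a sorted array: take the median as root and recursively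
build the left and right subtrees from the two halves (Algorithm 4). -/
def buildTree {α : Type} (l : List α) : BTree α :=
  if h : l.length = 0 then .leaf
  else
    let m := (l.length - 1) / 2
    .node (buildTree (l.take m)) (l.get ⟨m, by
        omega⟩)
      (buildTree (l.drop (m + 1)))
termination_by l.length
decreasing_by
  · simp [List.length_take]; omega
  · simp [List.length_drop]; omega

/-!
The in-order traversal of `buildTree l` is `l` itself, since `l.take m ++ l[m] :: l.drop (m + 1) = l`.
A tree whose in-order traversal is strictly increasing is a search tree, which gives the BST
property, and the traversal also yields the sizes of the subtrees: at a node built from `n` keys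
they are `(n - 1) / 2` and `n - 1 - (n - 1) / 2`, which differ by at most one.
-/

namespace BTree

variable {α : Type}

theorem size_eq_length_keys : ∀ t : BTree α, t.size = t.keys.length
  | leaf => rfl
  | node l _ r => by
    simp only [size, keys, size_eq_length_keys l, size_eq_length_keys r, List.length_append,
      List.length_cons]
    omega

theorem isBST_of_pairwise_keys [LinearOrder α] :
    ∀ t : BTree α, t.keys.Pairwise (· < ·) → t.isBST
  | leaf, _ => trivial
  | node l x r, h => by
    simp only [keys, List.pairwise_append, List.pairwise_cons, List.mem_cons] at h
    obtain ⟨hl, ⟨hx, hr⟩, hlr⟩ := h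
    exact ⟨fun y hy => hlr y hy x (.inl rfl), hx, isBST_of_pairwise_keys l hl,
      isBST_of_pairwise_keys r hr⟩

end BTree

section buildTree

variable {α : Type}

theorem buildTree_nil : buildTree ([] : List α) = .leaf := by
  rw [buildTree]; rfl

theorem buildTree_of_length_ne_zero {l : List α} (h : l.length ≠ 0) :
    buildTree l = .node (buildTree (l.take ((l.length - 1) / 2))) l[(l.length - 1) / 2]
      (buildTree (l.drop ((l.length - 1) / 2 + 1))) := by
  rw [buildTree, dif_neg h]; rfl

theorem keys_buildTree (l : List α) : (buildTree l).keys = l := by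
  induction l using buildTree.induct with
  | case1 l h => rw [List.length_eq_zero_iff.mp h, buildTree_nil]; rfl
  | case2 l h _ ihl ihr =>
    rw [buildTree_of_length_ne_zero h, BTree.keys, ihl, ihr, List.getElem_cons_drop,
      List.take_append_drop]

theorem size_buildTree (l : List α) : (buildTree l).size = l.length := by
  rw [BTree.size_eq_length_keys, keys_buildTree]

theorem balanced_buildTree (l : List α) : (buildTree l).balanced := by
  induction l using buildTree.induct with
  | case1 l h => rw [List.length_eq_zero_iff.mp h, buildTree_nil]; trivial
  | case2 l h _ ihl ihr =>
    rw [buildTree_of_length_ne_zero h]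
    refine ⟨?_, ihl, ihr⟩
    rw [size_buildTree, size_buildTree, List.length_take, List.length_drop]
    omega

end buildTree

theorem stmt_14 {α : Type} [LinearOrder α] (l : List α)
    (hsorted : l.Pairwise (· < ·)) :
    (buildTree l).isBST ∧ (buildTree l).balanced ∧
    (buildTree l).keys = l :=
  ⟨BTree.isBST_of_pairwise_keys _ (by rwa [keys_buildTree]), balanced_buildTree l,
    keys_buildTree l⟩
end
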